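/- arXiv:2412.10022 — 3 statements merged into one kernel-verified Lean document; each statement's English description precedes it below -/
import Mathlib

section
/- Let g : ℝ → [0,∞), g(τ) = |τ|^p μ(|τ|), where p > 1 and μ is a modulus of continuity with μ ∈ C¹((0,∞)) satisfying |μ'(τ)| ≤ K τ^{-1} μ(τ) for τ ∈ (0, τ₁). Then for all u, ũ with |u| + |ũ| < τ₁ one has |g(u) − g(ũ)| ≤ C μ(|u| + |ũ|) |u − ũ| (|u|^{p−1} + |ũ|^{p−1}) for a constant C depending only on p and K. -/
open Set

private lemma aux_mvt (p K : ℝ) (hp : 1 < p) (hK : 0 ≤ K)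
    (μ : ℝ → ℝ) (τ₁ : ℝ)
    (hμc : ContinuousOn μ (Ici 0)) (hμm : MonotoneOn μ (Ici 0))
    (hμ0 : ∀ τ ∈ Ici (0:ℝ), 0 ≤ μ τ)
    (hdiff : ∀ τ ∈ Ioi (0:ℝ), DifferentiableAt ℝ μ τ)
    (hder : ∀ τ ∈ Ioo (0:ℝ) τ₁, |deriv μ τ| ≤ K * τ⁻¹ * μ τ)
    (a b : ℝ) (hb : 0 ≤ b) (hba : b ≤ a) (ha : a < τ₁) :
    |a ^ p * μ a - b ^ p * μ b| ≤ (p + K) * μ a * (a - b) * a ^ (p - 1) := by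
  have hpK : (0:ℝ) < p + K := by linarith
  have ha0 : 0 ≤ a := hb.trans hba
  have hμa : 0 ≤ μ a := hμ0 a ha0
  rcases eq_or_lt_of_le hba with rfl | hlt
  · simp
  · set f' : ℝ → ℝ := fun t => p * t ^ (p-1) * μ t + t ^ p * deriv μ t with hf'
    have hcont : ContinuousOn (fun t : ℝ => t ^ p * μ t) (Icc b a) := by
      apply ContinuousOn.mul
      · exact (continuous_iff_continuousAt.2 fun x =>
          Real.continuousAt_rpow_const x p (Or.inr (by linarith))).continuousOn
      · exact hμc.mono (fun x hx => hb.trans hx.1)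
    have hderiv : ∀ c ∈ Ioo b a, HasDerivAt (fun t : ℝ => t ^ p * μ t) (f' c) c := by
      intro c hc
      have hc0 : 0 < c := lt_of_le_of_lt hb hc.1
      exact (Real.hasDerivAt_rpow_const (Or.inl hc0.ne')).mul
        ((hdiff c hc0).hasDerivAt)
    obtain ⟨c, hc, hceq⟩ := exists_hasDerivAt_eq_slope _ f' hlt hcont hderiv
    have hc0 : 0 < c := lt_of_le_of_lt hb hc.1
    have hμcnn : 0 ≤ μ c := hμ0 c hc0.le
    have hcτ : c < τ₁ := hc.2.trans_le (le_of_lt ha) |>.trans_le le_rfl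
    have hdc : |deriv μ c| ≤ K * c⁻¹ * μ c := hder c ⟨hc0, hcτ⟩
    have hcp : c ^ p * c⁻¹ = c ^ (p - 1) := by
      rw [Real.rpow_sub hc0, Real.rpow_one, div_eq_mul_inv]
    have hfb : |f' c| ≤ (p + K) * c ^ (p - 1) * μ c := by
      have h1 : |f' c| ≤ p * c ^ (p-1) * μ c + c ^ p * |deriv μ c| := by
        calc |f' c| ≤ |p * c ^ (p-1) * μ c| + |c ^ p * deriv μ c| := abs_add_le _ _
          _ = p * c ^ (p-1) * μ c + c ^ p * |deriv μ c| := by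
              rw [abs_mul, abs_mul, abs_mul,
                abs_of_nonneg (by linarith : (0:ℝ) ≤ p),
                abs_of_nonneg (Real.rpow_nonneg hc0.le _),
                abs_of_nonneg hμcnn,
                abs_of_nonneg (Real.rpow_nonneg hc0.le _)]
      have h2 : c ^ p * |deriv μ c| ≤ K * c ^ (p-1) * μ c := by
        calc c ^ p * |deriv μ c| ≤ c ^ p * (K * c⁻¹ * μ c) := by
              exact mul_le_mul_of_nonneg_left hdc (by positivity)
          _ = K * (c ^ p * c⁻¹) * μ c := by ring
          _ = K * c ^ (p-1) * μ c := by rw [hcp]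
      calc |f' c| ≤ p * c ^ (p-1) * μ c + K * c ^ (p-1) * μ c := by linarith
        _ = (p + K) * c ^ (p - 1) * μ c := by ring
    have hslope : a ^ p * μ a - b ^ p * μ b = f' c * (a - b) := by
      have hab : a - b ≠ 0 := by linarith
      rw [eq_div_iff hab] at hceq
      linarith [hceq]
    rw [hslope, abs_mul, abs_of_nonneg (by linarith : (0:ℝ) ≤ a - b)]
    have hcpow : c ^ (p-1) ≤ a ^ (p-1) :=
      Real.rpow_le_rpow hc0.le hc.2.le (by linarith)
    have hμca : μ c ≤ μ a := hμm hc0.le ha0 hc.2.le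
    have : |f' c| ≤ (p + K) * a ^ (p-1) * μ a := by
      calc |f' c| ≤ (p + K) * c ^ (p - 1) * μ c := hfb
        _ ≤ (p + K) * a ^ (p-1) * μ a := by
            apply mul_le_mul _ hμca hμcnn (by positivity)
            exact mul_le_mul_of_nonneg_left hcpow hpK.le
    calc |f' c| * (a - b) ≤ ((p + K) * a ^ (p-1) * μ a) * (a - b) := by
          exact mul_le_mul_of_nonneg_right this (by linarith)
      _ = (p + K) * μ a * (a - b) * a ^ (p - 1) := by ring

private lemma aux_main (p K : ℝ) (hp : 1 < p) (hK : 0 ≤ K)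
    (μ : ℝ → ℝ) (τ₁ : ℝ)
    (hμc : ContinuousOn μ (Ici 0)) (hμm : MonotoneOn μ (Ici 0))
    (hμ0 : ∀ τ ∈ Ici (0:ℝ), 0 ≤ μ τ)
    (hdiff : ∀ τ ∈ Ioi (0:ℝ), DifferentiableAt ℝ μ τ)
    (hder : ∀ τ ∈ Ioo (0:ℝ) τ₁, |deriv μ τ| ≤ K * τ⁻¹ * μ τ)
    (u w : ℝ) (hwu : |w| ≤ |u|) (huw : |u| + |w| < τ₁) :
    abs ((|u| ^ p * μ |u|) - (|w| ^ p * μ |w|))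
      ≤ (p + K) * μ (|u| + |w|) * |u - w| * (|u| ^ (p-1) + |w| ^ (p-1)) := by
  have hpK : (0:ℝ) < p + K := by linarith
  have h1 : |u| < τ₁ := by
    have := abs_nonneg w; linarith
  have key := aux_mvt p K hp hK μ τ₁ hμc hμm hμ0 hdiff hder |u| |w|
    (abs_nonneg w) hwu h1
  refine key.trans ?_
  have hμle : μ |u| ≤ μ (|u| + |w|) := by
    apply hμm (mem_Ici.mpr (abs_nonneg u)) (mem_Ici.mpr (by positivity)) (by linarith [abs_nonneg w])
  have hμnn : 0 ≤ μ |u| := hμ0 _ (abs_nonneg u)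
  have hμnn2 : 0 ≤ μ (|u| + |w|) := hμ0 _ (mem_Ici.mpr (by positivity))
  have hsub : |u| - |w| ≤ |u - w| := abs_sub_abs_le_abs_sub u w
  have hsubnn : 0 ≤ |u| - |w| := by linarith
  have hpow : |u| ^ (p-1) ≤ |u| ^ (p-1) + |w| ^ (p-1) := by
    have : (0:ℝ) ≤ |w| ^ (p-1) := Real.rpow_nonneg (abs_nonneg w) _
    linarith
  have hpownn : 0 ≤ |u| ^ (p-1) := Real.rpow_nonneg (abs_nonneg u) _
  calc (p + K) * μ |u| * (|u| - |w|) * |u| ^ (p-1)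
      ≤ (p + K) * μ (|u| + |w|) * |u - w| * (|u| ^ (p-1) + |w| ^ (p-1)) := by
        gcongr
  _ = _ := rfl

/-- Let `g(τ) = |τ|^p μ(|τ|)` with `p > 1` and `μ` a modulus of continuity which is `C¹`
on `(0,∞)` and satisfies `|μ'(τ)| ≤ K τ⁻¹ μ(τ)` on `(0,τ₁)`. Then there is a constant
`C > 0` depending only on `p` and `K` such that for all `u, w` with `|u| + |w| < τ₁`,
`|g(u) − g(w)| ≤ C μ(|u|+|w|) |u−w| (|u|^{p−1} + |w|^{p−1})`. -/
theorem nonlinearity_difference_estimate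
    (p K : ℝ) (hp : 1 < p) (hK : 0 ≤ K) :
    ∃ C : ℝ, 0 < C ∧
      ∀ (μ : ℝ → ℝ) (τ₁ : ℝ), 0 < τ₁ →
        ContinuousOn μ (Ici 0) → MonotoneOn μ (Ici 0) → μ 0 = 0 →
        (∀ τ ∈ Ici (0:ℝ), 0 ≤ μ τ) →
        (∀ τ ∈ Ioi (0:ℝ), DifferentiableAt ℝ μ τ) →
        (∀ τ ∈ Ioo (0:ℝ) τ₁, |deriv μ τ| ≤ K * τ⁻¹ * μ τ) →
        ∀ u w : ℝ, |u| + |w| < τ₁ →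
          abs ((|u| ^ p * μ |u|) - (|w| ^ p * μ |w|))
            ≤ C * μ (|u| + |w|) * |u - w| * (|u| ^ (p-1) + |w| ^ (p-1)) := by
  refine ⟨p + K, by linarith, ?_⟩
  intro μ τ₁ hτ₁ hμc hμm hμz hμ0 hdiff hder u w huw
  rcases le_total |w| |u| with h | h
  · exact aux_main p K hp hK μ τ₁ hμc hμm hμ0 hdiff hder u w h huw
  · have := aux_main p K hp hK μ τ₁ hμc hμm hμ0 hdiff hder w u h
      (by linarith)
    rw [abs_sub_comm, abs_sub_comm u w, add_comm (|u| ^ (p-1)), add_comm |u| |w|]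
    exact this
end

section
/- Let α₀ ∈ [0,1), α₁ ≥ 0, ν > 0, C̃₂ > 0, and let μ be a bounded increasing continuous function on [0, C̃₂ν]. Then for all t ≥ 0, ∫₀^t (1+t−η)^{−α₀} (1+η)^{−1} μ(C̃₂(1+η)^{−α₁}ν) dη ≤ C (1+t)^{−α₀} [ ∫₀^{t/2}(1+η)^{−1} μ(C̃₂(1+η)^{−α₁}ν) dη + μ(C̃₂ 2^{α₁}(1+t)^{−α₁}ν) ], with C independent of t, ν. -/
open MeasureTheory Set

/-- Splitting of the Duhamel integral: for `α₀ ∈ [0,1)`, `α₁ ≥ 0` and `C₂ > 0` there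
exists `C > 0` (independent of `t`, `ν` and `μ`) such that for every `ν > 0`, every
bounded increasing continuous `μ ≥ 0` and every `t ≥ 0`,
`∫₀^t (1+t−η)^{−α₀}(1+η)^{−1} μ(C₂(1+η)^{−α₁}ν) dη
  ≤ C (1+t)^{−α₀} [∫₀^{t/2}(1+η)^{−1} μ(C₂(1+η)^{−α₁}ν) dη + μ(C₂ 2^{α₁}(1+t)^{−α₁}ν)]`. -/
theorem duhamel_integral_splitting
    (α₀ α₁ C₂ : ℝ) (hα₀0 : 0 ≤ α₀) (hα₀1 : α₀ < 1) (hα₁ : 0 ≤ α₁) (hC₂ : 0 < C₂) :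
    ∃ C : ℝ, 0 < C ∧
      ∀ (ν : ℝ), 0 < ν →
      ∀ (μ : ℝ → ℝ), Continuous μ → Monotone μ → (∀ τ, 0 ≤ μ τ) →
      ∀ t : ℝ, 0 ≤ t →
        (∫ η in (0:ℝ)..t, (1 + t - η) ^ (-α₀) * (1 + η)⁻¹ * μ (C₂ * (1 + η) ^ (-α₁) * ν))
          ≤ C * (1 + t) ^ (-α₀) *
            ((∫ η in (0:ℝ)..(t/2), (1 + η)⁻¹ * μ (C₂ * (1 + η) ^ (-α₁) * ν))
              + μ (C₂ * 2 ^ α₁ * (1 + t) ^ (-α₁) * ν)) := by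
  have hb : (0:ℝ) < 1 - α₀ := by linarith
  have h2pos : (0:ℝ) < (2:ℝ) ^ α₀ := Real.rpow_pos_of_pos two_pos _
  refine ⟨(2:ℝ) ^ α₀ / (1 - α₀), div_pos h2pos hb, ?_⟩
  intro ν hν μ hμc hμm hμ0 t ht
  have h1t : (0:ℝ) < 1 + t := by linarith
  have hhalf : (0:ℝ) ≤ t / 2 := by linarith
  have hhalf' : t / 2 ≤ t := by linarith
  have h1h : (0:ℝ) < 1 + t / 2 := by linarith
  set f : ℝ → ℝ := fun η => (1 + t - η) ^ (-α₀) * (1 + η)⁻¹ * μ (C₂ * (1 + η) ^ (-α₁) * ν)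
    with hf
  set g : ℝ → ℝ := fun η => (1 + η)⁻¹ * μ (C₂ * (1 + η) ^ (-α₁) * ν) with hg
  -- continuity of f on [0, t]
  have hfc : ContinuousOn f (Icc 0 t) := by
    have h1 : ContinuousOn (fun η : ℝ => (1 + t - η) ^ (-α₀)) (Icc 0 t) := by
      apply ContinuousOn.rpow_const (by fun_prop)
      intro x hx
      left
      have : (1:ℝ) ≤ 1 + t - x := by linarith [hx.2]
      positivity
    have h2 : ContinuousOn (fun η : ℝ => (1 + η)⁻¹) (Icc 0 t) := by
      apply ContinuousOn.inv₀ (by fun_prop)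
      intro x hx
      have : (1:ℝ) ≤ 1 + x := by linarith [hx.1]
      positivity
    have h3 : ContinuousOn (fun η : ℝ => μ (C₂ * (1 + η) ^ (-α₁) * ν)) (Icc 0 t) := by
      apply hμc.comp_continuousOn
      apply ContinuousOn.mul (ContinuousOn.mul continuousOn_const ?_) continuousOn_const
      apply ContinuousOn.rpow_const (by fun_prop)
      intro x hx
      left
      have : (1:ℝ) ≤ 1 + x := by linarith [hx.1]
      positivity
    exact (h1.mul h2).mul h3
  have hgc : ContinuousOn g (Icc 0 t) := by
    have h2 : ContinuousOn (fun η : ℝ => (1 + η)⁻¹) (Icc 0 t) := by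
      apply ContinuousOn.inv₀ (by fun_prop)
      intro x hx
      have : (1:ℝ) ≤ 1 + x := by linarith [hx.1]
      positivity
    have h3 : ContinuousOn (fun η : ℝ => μ (C₂ * (1 + η) ^ (-α₁) * ν)) (Icc 0 t) := by
      apply hμc.comp_continuousOn
      apply ContinuousOn.mul (ContinuousOn.mul continuousOn_const ?_) continuousOn_const
      apply ContinuousOn.rpow_const (by fun_prop)
      intro x hx
      left
      have : (1:ℝ) ≤ 1 + x := by linarith [hx.1]
      positivity
    exact h2.mul h3
  have hsub1 : uIcc (0:ℝ) (t/2) ⊆ Icc 0 t := by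
    rw [uIcc_of_le hhalf]; exact Icc_subset_Icc le_rfl hhalf'
  have hsub2 : uIcc (t/2) t ⊆ Icc 0 t := by
    rw [uIcc_of_le hhalf']; exact Icc_subset_Icc hhalf le_rfl
  have hfi1 : IntervalIntegrable f volume 0 (t/2) :=
    (hfc.mono hsub1).intervalIntegrable
  have hfi2 : IntervalIntegrable f volume (t/2) t :=
    (hfc.mono hsub2).intervalIntegrable
  have hgi : IntervalIntegrable g volume 0 (t/2) :=
    (hgc.mono hsub1).intervalIntegrable
  have hsplit : (∫ η in (0:ℝ)..t, f η)
      = (∫ η in (0:ℝ)..(t/2), f η) + ∫ η in (t/2)..t, f η :=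
    (intervalIntegral.integral_add_adjacent_intervals hfi1 hfi2).symm
  set M : ℝ := μ (C₂ * 2 ^ α₁ * (1 + t) ^ (-α₁) * ν) with hM
  set I : ℝ := ∫ η in (0:ℝ)..(t/2), g η with hI
  have hIge : 0 ≤ I := by
    apply intervalIntegral.integral_nonneg hhalf
    intro x hx
    have hx1 : (0:ℝ) < 1 + x := by linarith [hx.1]
    exact mul_nonneg (by positivity) (hμ0 _)
  have hMge : 0 ≤ M := hμ0 _
  have hpow_t : (0:ℝ) < (1 + t) ^ (-α₀) := Real.rpow_pos_of_pos h1t _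
  -- key pointwise rpow bound: 1+t/2 ≥ (1+t)/2
  have hmid : (1 + t / 2 : ℝ) ^ (-α₀) ≤ 2 ^ α₀ * (1 + t) ^ (-α₀) := by
    have h1 : (1 + t / 2 : ℝ) ^ (-α₀) ≤ ((1 + t)/2) ^ (-α₀) :=
      Real.rpow_le_rpow_of_nonpos (by linarith) (by linarith) (by linarith)
    have h2 : ((1 + t)/2 : ℝ) ^ (-α₀) = 2 ^ α₀ * (1 + t) ^ (-α₀) := by
      rw [Real.div_rpow h1t.le (by norm_num), Real.rpow_neg (by norm_num : (0:ℝ) ≤ 2)]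
      field_simp
    linarith
  -- similarly for α₁
  have hmid1 : (1 + t / 2 : ℝ) ^ (-α₁) ≤ 2 ^ α₁ * (1 + t) ^ (-α₁) := by
    have h1 : (1 + t / 2 : ℝ) ^ (-α₁) ≤ ((1 + t)/2) ^ (-α₁) :=
      Real.rpow_le_rpow_of_nonpos (by linarith) (by linarith) (by linarith)
    have h2 : ((1 + t)/2 : ℝ) ^ (-α₁) = 2 ^ α₁ * (1 + t) ^ (-α₁) := by
      rw [Real.div_rpow h1t.le (by norm_num), Real.rpow_neg (by norm_num : (0:ℝ) ≤ 2)]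
      field_simp
    linarith
  -- bound on the first piece
  have hbound1 : (∫ η in (0:ℝ)..(t/2), f η) ≤ 2 ^ α₀ * (1 + t) ^ (-α₀) * I := by
    have hpt : ∀ x ∈ Icc (0:ℝ) (t/2), f x ≤ 2 ^ α₀ * (1 + t) ^ (-α₀) * g x := by
      intro x hx
      have hx1 : (0:ℝ) < 1 + x := by linarith [hx.1]
      have hbase : (1 + t / 2 : ℝ) ≤ 1 + t - x := by linarith [hx.2]
      have hr : (1 + t - x : ℝ) ^ (-α₀) ≤ 2 ^ α₀ * (1 + t) ^ (-α₀) := by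
        have := Real.rpow_le_rpow_of_nonpos h1h hbase (by linarith : -α₀ ≤ 0)
        linarith
      have hgnn : 0 ≤ g x := mul_nonneg (by positivity) (hμ0 _)
      calc f x = (1 + t - x) ^ (-α₀) * g x := by simp [hf, hg, mul_assoc]
        _ ≤ (2 ^ α₀ * (1 + t) ^ (-α₀)) * g x := mul_le_mul_of_nonneg_right hr hgnn
        _ = 2 ^ α₀ * (1 + t) ^ (-α₀) * g x := by ring
    calc (∫ η in (0:ℝ)..(t/2), f η)
        ≤ ∫ η in (0:ℝ)..(t/2), 2 ^ α₀ * (1 + t) ^ (-α₀) * g η :=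
          intervalIntegral.integral_mono_on hhalf hfi1
            ((hgi.const_mul _)) hpt
      _ = 2 ^ α₀ * (1 + t) ^ (-α₀) * I := by
          rw [hI, ← intervalIntegral.integral_const_mul]
  -- bound on the second piece
  have hJ : (∫ η in (t/2)..t, (1 + t - η) ^ (-α₀))
      = ((1 + t/2) ^ (1 - α₀) - 1) / (1 - α₀) := by
    have e1 : (∫ η in (t/2)..t, (1 + t - η) ^ (-α₀))
        = ∫ s in (t - t)..(t - t/2), (1 + s) ^ (-α₀) := by
      rw [← intervalIntegral.integral_comp_sub_left (fun s => (1 + s) ^ (-α₀)) t]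
      congr 1; ext η; ring_nf
    rw [e1]
    have e2 : (∫ s in (t - t)..(t - t/2), (1 + s) ^ (-α₀))
        = ∫ u in (1 + (t - t))..(1 + (t - t/2)), u ^ (-α₀) := by
      rw [← intervalIntegral.integral_comp_add_left (fun u => u ^ (-α₀)) 1]
    rw [e2]
    have : (1 + (t - t) : ℝ) = 1 := by ring
    rw [this]
    rw [integral_rpow (Or.inl (by linarith : (-1:ℝ) < -α₀))]
    have h1 : (1:ℝ) ^ (-α₀ + 1) = 1 := Real.one_rpow _
    rw [h1]
    have : (1 + (t - t/2) : ℝ) = 1 + t/2 := by ring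
    rw [this]
    have : (-α₀ + 1 : ℝ) = 1 - α₀ := by ring
    rw [this]
  have hbound2 : (∫ η in (t/2)..t, f η)
      ≤ 2 ^ α₀ * (1 + t) ^ (-α₀) / (1 - α₀) * M := by
    have hpt : ∀ x ∈ Icc (t/2) t, f x ≤ (1 + t - x) ^ (-α₀) * ((1 + t/2)⁻¹ * M) := by
      intro x hx
      have hx1 : (1 + t/2 : ℝ) ≤ 1 + x := by linarith [hx.1]
      have hx0 : (0:ℝ) < 1 + x := by linarith
      have hbpos : (0:ℝ) ≤ (1 + t - x) ^ (-α₀) := by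
        have : (0:ℝ) < 1 + t - x := by linarith [hx.2]
        positivity
      have hinv : (1 + x : ℝ)⁻¹ ≤ (1 + t/2)⁻¹ := by
        apply inv_anti₀ h1h hx1
      have hμle : μ (C₂ * (1 + x) ^ (-α₁) * ν) ≤ M := by
        apply hμm
        have hr : (1 + x : ℝ) ^ (-α₁) ≤ 2 ^ α₁ * (1 + t) ^ (-α₁) := by
          have := Real.rpow_le_rpow_of_nonpos h1h hx1 (by linarith : -α₁ ≤ 0)
          linarith
        have h2a : (0:ℝ) < (2:ℝ) ^ α₁ * (1 + t) ^ (-α₁) := by positivity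
        calc C₂ * (1 + x) ^ (-α₁) * ν ≤ C₂ * (2 ^ α₁ * (1 + t) ^ (-α₁)) * ν := by
              apply mul_le_mul_of_nonneg_right _ hν.le
              exact mul_le_mul_of_nonneg_left hr hC₂.le
          _ = C₂ * 2 ^ α₁ * (1 + t) ^ (-α₁) * ν := by ring
      have hμnn := hμ0 (C₂ * (1 + x) ^ (-α₁) * ν)
      calc f x = (1 + t - x) ^ (-α₀) * ((1 + x)⁻¹ * μ (C₂ * (1 + x) ^ (-α₁) * ν)) := by
            simp [hf, mul_assoc]
        _ ≤ (1 + t - x) ^ (-α₀) * ((1 + t/2)⁻¹ * M) := by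
            apply mul_le_mul_of_nonneg_left _ hbpos
            apply mul_le_mul hinv hμle hμnn (by positivity)
    have hii : IntervalIntegrable (fun η => (1 + t - η) ^ (-α₀) * ((1 + t/2)⁻¹ * M))
        volume (t/2) t := by
      apply ContinuousOn.intervalIntegrable
      apply ContinuousOn.mul _ continuousOn_const
      apply ContinuousOn.rpow_const (by fun_prop)
      intro x hx
      left
      rw [uIcc_of_le hhalf'] at hx
      have : (0:ℝ) < 1 + t - x := by linarith [hx.2]
      positivity
    have step1 : (∫ η in (t/2)..t, f η)
        ≤ ∫ η in (t/2)..t, (1 + t - η) ^ (-α₀) * ((1 + t/2)⁻¹ * M) :=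
      intervalIntegral.integral_mono_on hhalf' hfi2 hii hpt
    have step2 : (∫ η in (t/2)..t, (1 + t - η) ^ (-α₀) * ((1 + t/2)⁻¹ * M))
        = ((1 + t/2) ^ (1 - α₀) - 1) / (1 - α₀) * ((1 + t/2)⁻¹ * M) := by
      rw [← hJ, ← intervalIntegral.integral_mul_const]
    have step3 : ((1 + t/2) ^ (1 - α₀) - 1) / (1 - α₀) * ((1 + t/2)⁻¹ * M)
        ≤ 2 ^ α₀ * (1 + t) ^ (-α₀) / (1 - α₀) * M := by
      have key : ((1 + t/2) ^ (1 - α₀) - 1) * (1 + t/2)⁻¹ ≤ 2 ^ α₀ * (1 + t) ^ (-α₀) := by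
        have h1 : ((1 + t/2) ^ (1 - α₀) - 1) * (1 + t/2)⁻¹
            ≤ (1 + t/2) ^ (1 - α₀) * (1 + t/2)⁻¹ := by
          apply mul_le_mul_of_nonneg_right _ (by positivity)
          have : (0:ℝ) < (1 + t/2) ^ (1 - α₀) := Real.rpow_pos_of_pos h1h _
          linarith
        have h2 : (1 + t/2 : ℝ) ^ (1 - α₀) * (1 + t/2)⁻¹ = (1 + t/2) ^ (-α₀) := by
          rw [← Real.rpow_neg_one (1 + t/2), ← Real.rpow_add h1h]
          ring_nf
        calc ((1 + t/2) ^ (1 - α₀) - 1) * (1 + t/2)⁻¹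
            ≤ (1 + t/2) ^ (1 - α₀) * (1 + t/2)⁻¹ := h1
          _ = (1 + t/2) ^ (-α₀) := h2
          _ ≤ 2 ^ α₀ * (1 + t) ^ (-α₀) := hmid
      calc ((1 + t/2) ^ (1 - α₀) - 1) / (1 - α₀) * ((1 + t/2)⁻¹ * M)
          = (((1 + t/2) ^ (1 - α₀) - 1) * (1 + t/2)⁻¹) * M / (1 - α₀) := by ring
        _ ≤ (2 ^ α₀ * (1 + t) ^ (-α₀)) * M / (1 - α₀) := by
            gcongr
        _ = 2 ^ α₀ * (1 + t) ^ (-α₀) / (1 - α₀) * M := by ring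
    calc (∫ η in (t/2)..t, f η)
        ≤ ∫ η in (t/2)..t, (1 + t - η) ^ (-α₀) * ((1 + t/2)⁻¹ * M) := step1
      _ = ((1 + t/2) ^ (1 - α₀) - 1) / (1 - α₀) * ((1 + t/2)⁻¹ * M) := step2
      _ ≤ 2 ^ α₀ * (1 + t) ^ (-α₀) / (1 - α₀) * M := step3
  -- combine
  have hfinal : 2 ^ α₀ * (1 + t) ^ (-α₀) * I + 2 ^ α₀ * (1 + t) ^ (-α₀) / (1 - α₀) * M
      ≤ 2 ^ α₀ / (1 - α₀) * (1 + t) ^ (-α₀) * (I + M) := by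
    have h1le : (1:ℝ) ≤ (1 - α₀)⁻¹ := by
      rw [le_inv_comm₀ one_pos hb]; linarith
    have e1 : 2 ^ α₀ / (1 - α₀) * (1 + t) ^ (-α₀) * (I + M)
        = (2 ^ α₀ * (1 - α₀)⁻¹) * (1 + t) ^ (-α₀) * I
          + 2 ^ α₀ * (1 + t) ^ (-α₀) / (1 - α₀) * M := by
      field_simp
    rw [e1]
    have : 2 ^ α₀ * (1 + t) ^ (-α₀) * I ≤ (2 ^ α₀ * (1 - α₀)⁻¹) * (1 + t) ^ (-α₀) * I := by
      apply mul_le_mul_of_nonneg_right _ hIge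
      apply mul_le_mul_of_nonneg_right _ hpow_t.le
      nlinarith
    linarith
  calc (∫ η in (0:ℝ)..t, f η)
      = (∫ η in (0:ℝ)..(t/2), f η) + ∫ η in (t/2)..t, f η := hsplit
    _ ≤ 2 ^ α₀ * (1 + t) ^ (-α₀) * I + 2 ^ α₀ * (1 + t) ^ (-α₀) / (1 - α₀) * M :=
        add_le_add hbound1 hbound2
    _ ≤ 2 ^ α₀ / (1 - α₀) * (1 + t) ^ (-α₀) * (I + M) := hfinal
end

section
/- Let p > 1 and let Ỹ : [1,∞) → (0,∞) be C¹ with Ỹ(R) ≥ a > 0 for all R, and suppose Ỹ'(R)/Ỹ(R)^p ≥ c R^{−1} μ(a R^{−θ}) for all R ≥ 1, where θ > 0, c > 0 and μ is increasing and nonnegative. Then for every R ≥ 1: (1/(p−1)) a^{1−p} ≥ (c/θ) ∫_{aR^{−θ}}^{a} μ(τ)/τ dτ. -/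
/-!
Substituting `τ = a r^{-θ}`, for which `dτ / τ = -θ dr / r`, turns
`(c/θ) ∫_{aR^{-θ}}^a μ(τ)/τ dτ` into `∫_1^R c r⁻¹ μ(a r^{-θ}) dr`, which by hypothesis is at most
`∫_1^R Y'/Y^p`. Since `Y^{1-p}/(1-p)` is an antiderivative of `Y'/Y^p`, this integral equals
`(Y(1)^{1-p} - Y(R)^{1-p})/(p-1) ≤ a^{1-p}/(p-1)`.
-/

open Set MeasureTheory

lemma antitoneOn_const_mul_rpow_neg {a θ : ℝ} (ha : 0 ≤ a) (hθ : 0 ≤ θ) :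
    AntitoneOn (fun r : ℝ => a * r ^ (-θ)) (Ioi 0) := fun _ hx _ _ hxy =>
  mul_le_mul_of_nonneg_left (Real.rpow_le_rpow_of_nonpos hx hxy (neg_nonpos.2 hθ)) ha

lemma intervalIntegrable_comp_const_mul_rpow_neg_div {μ : ℝ → ℝ} (hμ : Monotone μ) {a θ s t : ℝ}
    (ha : 0 ≤ a) (hθ : 0 ≤ θ) (hs : 0 < s) (hst : s ≤ t) :
    IntervalIntegrable (fun r => μ (a * r ^ (-θ)) / r) volume s t := by
  have hsub : uIcc s t ⊆ Ioi 0 := by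
    rw [uIcc_of_le hst]; exact fun x hx => hs.trans_le hx.1
  simpa only [div_eq_mul_inv, Function.comp_apply] using
    (hμ.comp_antitoneOn ((antitoneOn_const_mul_rpow_neg ha hθ).mono hsub)).intervalIntegrable
      |>.mul_continuousOn (continuousOn_inv₀.mono fun x hx => (hsub hx).ne')

theorem integral_div_eq_mul_integral_comp_const_mul_rpow_neg (g : ℝ → ℝ) {a θ s t : ℝ}
    (ha : 0 < a) (hθ : 0 ≤ θ) (hs : 0 < s) (hst : s ≤ t) :
    ∫ τ in a * t ^ (-θ)..a * s ^ (-θ), g τ / τ = θ * ∫ r in s..t, g (a * r ^ (-θ)) / r := by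
  have hpos : ∀ x ∈ Icc s t, 0 < x := fun x hx => hs.trans_le hx.1
  have hderiv : ∀ x ∈ Icc s t,
      HasDerivAt (fun r : ℝ => a * r ^ (-θ)) (a * (-θ * x ^ (-θ - 1))) x := fun x hx =>
    (Real.hasDerivAt_rpow_const (Or.inl (hpos x hx).ne')).const_mul a
  have hchange := integral_Icc_deriv_smul_of_deriv_nonpos (g := fun τ => g τ / τ)
    (HasDerivAt.continuousOn hderiv) (fun x hx => hderiv x (Ioo_subset_Icc_self hx))
    (fun x hx => by
      have hpow := Real.rpow_pos_of_pos (hpos x (Ioo_subset_Icc_self hx)) (-θ - 1)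
      nlinarith [mul_nonneg ha.le hθ]) hst
  rw [intervalIntegral.integral_of_le
      (antitoneOn_const_mul_rpow_neg ha.le hθ hs (hs.trans_le hst) hst),
    intervalIntegral.integral_of_le hst, ← integral_Icc_eq_integral_Ioc,
    ← integral_Icc_eq_integral_Ioc, neg_eq_iff_eq_neg.1 hchange.symm, ← integral_const_mul,
    ← integral_neg]
  refine setIntegral_congr_fun measurableSet_Icc fun x hx => ?_
  have hx := hpos x hx
  have hpow := Real.rpow_pos_of_pos hx (-θ)
  simp only [smul_eq_mul, Real.rpow_sub_one hx.ne']
  field_simp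

lemma HasDerivAt.rpow_one_sub_div {Y : ℝ → ℝ} {y' x p : ℝ} (hY : HasDerivAt Y y' x)
    (hx : 0 < Y x) (hp : p ≠ 1) :
    HasDerivAt (fun r => Y r ^ (1 - p) / (1 - p)) (y' / Y x ^ p) x := by
  refine ((hY.rpow_const (p := 1 - p) (Or.inl hx.ne')).div_const (1 - p)).congr_deriv ?_
  rw [sub_sub_cancel_left, Real.rpow_neg hx.le]
  field_simp [sub_ne_zero.2 hp.symm]

theorem integral_le_of_le_deriv_div_rpow {φ Y Y' : ℝ → ℝ} {p s t : ℝ} (hp : 1 < p) (hst : s ≤ t)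
    (hY : ∀ x ∈ Icc s t, HasDerivAt Y (Y' x) x) (hpos : ∀ x ∈ Icc s t, 0 < Y x)
    (hφ : IntegrableOn φ (Icc s t)) (hle : ∀ x ∈ Ioo s t, φ x ≤ Y' x / Y x ^ p) :
    ∫ x in s..t, φ x ≤ Y s ^ (1 - p) / (p - 1) := by
  have hderiv : ∀ x ∈ Icc s t, HasDerivAt (fun r => Y r ^ (1 - p) / (1 - p)) (Y' x / Y x ^ p) x :=
    fun x hx => (hY x hx).rpow_one_sub_div (hpos x hx) hp.ne'
  have hYt := Real.rpow_pos_of_pos (hpos t ⟨hst, le_rfl⟩) (1 - p)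
  calc ∫ x in s..t, φ x
      ≤ Y t ^ (1 - p) / (1 - p) - Y s ^ (1 - p) / (1 - p) :=
        intervalIntegral.integral_le_sub_of_hasDeriv_right_of_le hst
          (HasDerivAt.continuousOn hderiv)
          (fun x hx => (hderiv x (Ioo_subset_Icc_self hx)).hasDerivWithinAt) hφ hle
    _ ≤ Y s ^ (1 - p) / (p - 1) := by
        have hYt_term : Y t ^ (1 - p) / (1 - p) ≤ 0 :=
          div_nonpos_of_nonneg_of_nonpos hYt.le (by linarith)
        have hYs_term : Y s ^ (1 - p) / (1 - p) = -(Y s ^ (1 - p) / (p - 1)) := by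
          rw [← div_neg, neg_sub]
        linarith

theorem blowup_ode_integral_bound_general
    (p a c θ : ℝ) (hp : 1 < p) (ha : 0 < a) (hθ : 0 < θ)
    (μ : ℝ → ℝ) (hmono : Monotone μ)
    (Y Y' : ℝ → ℝ)
    (hderiv : ∀ R : ℝ, 1 ≤ R → HasDerivAt Y (Y' R) R)
    (hYa : ∀ R : ℝ, 1 ≤ R → a ≤ Y R)
    (hineq : ∀ R : ℝ, 1 ≤ R → c * R⁻¹ * μ (a * R ^ (-θ)) ≤ Y' R / (Y R) ^ p) :
    ∀ R : ℝ, 1 ≤ R →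
      (c/θ) * (∫ τ in (a * R ^ (-θ))..a, μ τ / τ) ≤ (1/(p-1)) * a ^ (1-p) := by
  intro R hR
  have hchange := integral_div_eq_mul_integral_comp_const_mul_rpow_neg μ ha hθ.le one_pos hR
  rw [Real.one_rpow, mul_one] at hchange
  have hφ : IntegrableOn (fun r => c * r⁻¹ * μ (a * r ^ (-θ))) (Icc 1 R) := by
    have hint := (intervalIntegrable_comp_const_mul_rpow_neg_div hmono ha.le hθ.le one_pos
      hR).const_mul c
    rw [intervalIntegrable_iff_integrableOn_Icc_of_le hR] at hint
    exact hint.congr_fun (fun r _ => by ring) measurableSet_Icc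
  calc (c / θ) * ∫ τ in a * R ^ (-θ)..a, μ τ / τ
      = ∫ r in 1..R, c * r⁻¹ * μ (a * r ^ (-θ)) := by
        rw [hchange, ← mul_assoc, div_mul_cancel₀ c hθ.ne', ← intervalIntegral.integral_const_mul]
        congr 1 with r
        ring
    _ ≤ Y 1 ^ (1 - p) / (p - 1) :=
        integral_le_of_le_deriv_div_rpow hp hR (fun x hx => hderiv x hx.1)
          (fun x hx => ha.trans_le (hYa x hx.1)) hφ (fun x hx => hineq x hx.1.le)
    _ ≤ (1 / (p - 1)) * a ^ (1 - p) := by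
        rw [one_div_mul_eq_div]
        exact div_le_div_of_nonneg_right
          (Real.rpow_le_rpow_of_nonpos ha (hYa 1 le_rfl) (by linarith)) (by linarith)

/-- Key blow-up ODE argument: if `Ỹ` is `C¹` on `[1,∞)` with `Ỹ ≥ a > 0` and
`Ỹ'(R)/Ỹ(R)^p ≥ c R⁻¹ μ(a R^{−θ})` for all `R ≥ 1`, where `p > 1`, `θ, c > 0` and `μ`
is increasing and nonnegative, then for every `R ≥ 1`,
`(1/(p−1)) a^{1−p} ≥ (c/θ) ∫_{aR^{−θ}}^a μ(τ)/τ dτ`. -/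
theorem blowup_ode_integral_bound
    (p a c θ : ℝ) (hp : 1 < p) (ha : 0 < a) (hc : 0 < c) (hθ : 0 < θ)
    (μ : ℝ → ℝ) (hmono : Monotone μ) (hnonneg : ∀ τ, 0 ≤ μ τ)
    (Y Y' : ℝ → ℝ)
    (hderiv : ∀ R : ℝ, 1 ≤ R → HasDerivAt Y (Y' R) R)
    (hY'cont : ContinuousOn Y' (Ici 1))
    (hYa : ∀ R : ℝ, 1 ≤ R → a ≤ Y R)
    (hineq : ∀ R : ℝ, 1 ≤ R → c * R⁻¹ * μ (a * R ^ (-θ)) ≤ Y' R / (Y R) ^ p) :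
    ∀ R : ℝ, 1 ≤ R →
      (c/θ) * (∫ τ in (a * R ^ (-θ))..a, μ τ / τ) ≤ (1/(p-1)) * a ^ (1-p) :=
  blowup_ode_integral_bound_general p a c θ hp ha hθ μ hmono Y Y' hderiv hYa hineq
end
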